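/- Let E and B be Banach spaces, J : E → B an injective continuous linear map, and S : B → E a linear map such that S ∘ J : E → E is continuous and |J ∘ S|_{L(B,B)} ≤ ε for some ε ∈ (0,1). Then the continuous linear map L : E → E, L x = x − S(J x), is a topological isomorphism: L is bijective with continuous inverse. -/

import Mathlib

/-!
`J ∘ S` has norm `< 1` on the Banach space `B`, so `1 - J ∘ S` is invertible by the Neumann
series. Jacobson's lemma transfers invertibility to `1 - S ∘ J`, which is continuous by hypothesis,
and the open mapping theorem makes its inverse continuous.
-/

open Function

/-- Jacobson's lemma; the inverse is `1 + g (1 - f g)⁻¹ f`. -/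
theorem LinearMap.bijective_one_sub_comp_of_bijective_one_sub_comp {R M N : Type*} [Ring R]
    [AddCommGroup M] [Module R M] [AddCommGroup N] [Module R N] {f : M →ₗ[R] N} {g : N →ₗ[R] M}
    (h : Bijective ⇑(1 - f ∘ₗ g : Module.End R N)) : Bijective ⇑(1 - g ∘ₗ f : Module.End R M) := by
  refine ⟨(injective_iff_map_eq_zero _).mpr fun x hx => ?_, fun y => ?_⟩
  · replace hx : x = g (f x) := sub_eq_zero.mp hx
    have hfx : f x = 0 := h.1 <| show f x - f (g (f x)) = 0 - f (g 0) by
      rw [← hx, sub_self, map_zero, map_zero, sub_zero]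
    rw [hx, hfx, map_zero]
  · obtain ⟨b, hb : b - f (g b) = f y⟩ := h.2 (f y)
    have hf : f (y + g b) = b := by rw [map_add, ← hb]; abel
    exact ⟨y + g b, show y + g b - g (f (y + g b)) = y by rw [hf]; abel⟩

theorem stmt14_general
    {E B : Type*} [NormedAddCommGroup E] [NormedSpace ℝ E] [CompleteSpace E]
    [NormedAddCommGroup B] [NormedSpace ℝ B] [CompleteSpace B]
    (J : E →L[ℝ] B)
    (S : B →ₗ[ℝ] E) (hSJ : Continuous fun x : E => S (J x))
    (ε : ℝ) (hε : ε ∈ Set.Ioo (0:ℝ) 1)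
    (hJS : ∀ x : B, ‖J (S x)‖ ≤ ε * ‖x‖) :
    ∃ e : E ≃L[ℝ] E, ∀ x : E, e x = x - S (J x) := by
  obtain ⟨hε0, hε1⟩ := hε
  let T : B →L[ℝ] B := (J.toLinearMap ∘ₗ S).mkContinuous ε hJS
  have hT : ‖T‖ < 1 := (LinearMap.mkContinuous_norm_le _ hε0.le hJS).trans_lt hε1
  have hB : Bijective ⇑(1 - T) :=
    ContinuousLinearMap.isUnit_iff_bijective.mp (isUnit_one_sub_of_norm_lt_one hT)
  let L : E →L[ℝ] E := ⟨LinearMap.id - S ∘ₗ J.toLinearMap, continuous_id.sub hSJ⟩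
  have hL : Bijective L := LinearMap.bijective_one_sub_comp_of_bijective_one_sub_comp hB
  exact ⟨.ofBijective L (LinearMap.ker_eq_bot.mpr hL.1) (LinearMap.range_eq_top.mpr hL.2),
    fun _ => rfl⟩

/-- **Abstract isomorphism lemma.** Let `E`, `B` be Banach spaces, `J : E → B` an injective
continuous linear map, and `S : B → E` a linear map such that `S ∘ J : E → E` is continuous
and `‖J ∘ S‖_{L(B,B)} ≤ ε` for some `ε ∈ (0,1)` (i.e. `‖J (S x)‖ ≤ ε ‖x‖` for all `x`).
Then the continuous linear map `L : E → E`, `L x = x − S (J x)`, is a topological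
isomorphism: `L` is bijective with continuous inverse. -/
theorem stmt14
    {E B : Type*} [NormedAddCommGroup E] [NormedSpace ℝ E] [CompleteSpace E]
    [NormedAddCommGroup B] [NormedSpace ℝ B] [CompleteSpace B]
    (J : E →L[ℝ] B) (hJ : Function.Injective J)
    (S : B →ₗ[ℝ] E) (hSJ : Continuous fun x : E => S (J x))
    (ε : ℝ) (hε : ε ∈ Set.Ioo (0:ℝ) 1)
    (hJS : ∀ x : B, ‖J (S x)‖ ≤ ε * ‖x‖) :
    ∃ e : E ≃L[ℝ] E, ∀ x : E, e x = x - S (J x) :=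
  stmt14_general J S hSJ ε hε hJS
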